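/- Let m be a positive integer such that 5m² − 2m + 1 is square-free, and let α be a root of f = mx² + (m−1)x − m. Then f is irreducible over ℚ, K = ℚ(α) is a real quadratic field with discriminant D = 5m² − 2m + 1, and H(α)/√D = m/√(5m² − 2m + 1). In particular H(α)/√D tends to 1/√5 as m → ∞. -/

import Mathlib

open NumberField IntermediateField Polynomial Filter

/-!
The discriminant `5m² - 2m + 1` of `f` is squarefree and larger than `1`, so it is not a rational
square: `f` has no rational root, is irreducible, and `K` is quadratic. The algebraic integer
`β = m α` is a root of `X² + (m - 1) X - m²`, so the basis `1, β` of `K` has discriminant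
`(m - 1)² + 4m² = 5m² - 2m + 1`. This equals `[𝓞 K : ℤ[β]]² · D`, and squarefreeness forces the
index to be `1`. Finally `H(α) = max(m, |m - 1|, m) = m`.
-/

theorem Int.ratCast_ne_sq_of_squarefree {d : ℤ} (hd : Squarefree d) (h1 : d ≠ 1) (s : ℚ) :
    (d : ℚ) ≠ s ^ 2 := by
  intro hs
  obtain ⟨r, rfl⟩ := Rat.isSquare_intCast_iff.mp ⟨s, hs.trans (sq s)⟩
  rcases Int.isUnit_iff.mp (hd r ⟨1, (mul_one _).symm⟩) with rfl | rfl <;> simp at h1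

theorem Polynomial.irreducible_quadratic_of_discrim_ne_sq {F : Type*} [Field F] {a b c : F}
    (ha : a ≠ 0) (h : ∀ s : F, discrim a b c ≠ s ^ 2) :
    Irreducible (C a * X ^ 2 + C b * X + C c) := by
  have hdeg := natDegree_quadratic (b := b) (c := c) ha
  rw [irreducible_iff_roots_eq_zero_of_degree_le_three (by omega) (by omega),
    Multiset.eq_zero_iff_forall_notMem]
  intro x hx
  rw [mem_roots (ne_zero_of_natDegree_gt (n := 0) (by omega)), IsRoot.def] at hx
  apply quadratic_ne_zero_of_discrim_ne_sq h x
  simpa [sq, mul_assoc] using hx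

theorem IntermediateField.finrank_eq_natDegree_of_irreducible {F K : Type*} [Field F] [Field K]
    [Algebra F K] {α : K} (hgen : F⟮α⟯ = ⊤) {p : F[X]} (hp : Irreducible p)
    (hα : aeval α p = 0) : Module.finrank F K = p.natDegree := by
  have hint : IsIntegral F α := IsAlgebraic.isIntegral ⟨p, hp.ne_zero, hα⟩
  rw [← finrank_top', ← hgen, adjoin.finrank hint, ← minpoly.eq_of_irreducible hp hα,
    natDegree_mul_C (inv_ne_zero (leadingCoeff_ne_zero.mpr hp.ne_zero))]

theorem linearIndependent_one_of_forall_algebraMap_ne {F K : Type*} [Field F] [Ring K]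
    [Nontrivial K] [Algebra F K] {x : K} (hx : ∀ r : F, algebraMap F K r ≠ x) :
    LinearIndependent F ![1, x] := by
  rw [linearIndependent_fin2]
  refine ⟨fun h => hx 0 (by simpa using h.symm), fun a hax => hx a⁻¹ ?_⟩
  have ha : a ≠ 0 := by rintro rfl; simp at hax
  simp only [Matrix.cons_val_one, Matrix.cons_val_zero, Algebra.smul_def] at hax
  rw [← mul_one (algebraMap F K a⁻¹), ← hax, ← mul_assoc, ← map_mul, inv_mul_cancel₀ ha, map_one,
    one_mul]

theorem Algebra.discr_basis_one_quadratic_root {F K : Type*} [CommRing F] [Nontrivial F]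
    [CommRing K] [Algebra F K] (b : Module.Basis (Fin 2) F K) (hb0 : b 0 = 1) {p q : F}
    (hroot : b 1 ^ 2 + algebraMap F K p * b 1 + algebraMap F K q = 0) :
    Algebra.discr F b = p ^ 2 - 4 * q := by
  have := Module.Free.of_basis b
  have := Module.Finite.of_basis b
  have hsq : b 1 * b 1 = (-q) • b 0 + (-p) • b 1 := by
    rw [hb0, Algebra.smul_def, Algebra.smul_def]
    simp only [map_neg]
    linear_combination hroot
  have tr_one : Algebra.trace F K 1 = 2 := by
    rw [← map_one (algebraMap F K), Algebra.trace_algebraMap, Module.finrank_eq_card_basis b]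
    simp
  have tr_b1 : Algebra.trace F K (b 1) = -p := by
    rw [Algebra.trace_eq_matrix_trace b, Matrix.trace_fin_two, Algebra.leftMulMatrix_eq_repr_mul,
      Algebra.leftMulMatrix_eq_repr_mul, hb0, mul_one, hsq]
    simp
  have tr_sq : Algebra.trace F K (b 1 * b 1) = p ^ 2 - 2 * q := by
    rw [hsq, map_add, map_smul, map_smul, hb0, tr_one, tr_b1, smul_eq_mul, smul_eq_mul]
    ring
  rw [Algebra.discr_def, Matrix.det_fin_two]
  simp only [Algebra.traceMatrix_apply, Algebra.traceForm_apply, hb0, one_mul, mul_one,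
    tr_one, tr_b1, tr_sq]
  ring

theorem tendsto_div_sqrt_quadratic {a b c : ℝ} (ha : 0 < a) :
    Tendsto (fun k : ℕ => (k : ℝ) / √(a * k ^ 2 + b * k + c)) atTop (nhds (1 / √a)) := by
  have hcont : ContinuousAt (fun u : ℝ => 1 / √(a + b * u + c * u ^ 2)) 0 :=
    continuousAt_const.div (Real.continuous_sqrt.continuousAt.comp (by fun_prop))
      (by simpa using (Real.sqrt_pos.mpr ha).ne')
  have hlim := (hcont.tendsto.comp tendsto_inv_atTop_nhds_zero_nat)
  simp only [mul_zero, add_zero, zero_pow two_ne_zero] at hlim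
  refine hlim.congr' ?_
  filter_upwards [eventually_ge_atTop 1] with k hk
  have hk0 : (0 : ℝ) < k := by exact_mod_cast hk
  have : a + b * (k : ℝ)⁻¹ + c * (k : ℝ)⁻¹ ^ 2 = (a * k ^ 2 + b * k + c) / k ^ 2 := by
    field_simp
  simp only [Function.comp_apply, this, Real.sqrt_div' _ (sq_nonneg _), Real.sqrt_sq hk0.le,
    one_div_div]

theorem NumberField.exists_algebra_discr_eq_sq_mul_discr {K : Type*} [Field K] [NumberField K]
    {ι : Type*} [Fintype ι] [DecidableEq ι] (b : Module.Basis ι ℚ K)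
    (hb : ∀ i, IsIntegral ℤ (b i)) : ∃ q : ℤ, Algebra.discr ℚ b = q ^ 2 * discr K := by
  let e := (integralBasis K).indexEquiv b
  let b₀ := (integralBasis K).reindex e
  have hentries : ∀ i j, IsIntegral ℤ (b₀.toMatrix b i j) := fun i j => by
    obtain ⟨y, hy⟩ : ∃ y : 𝓞 K, algebraMap (𝓞 K) K y = b j := ⟨⟨b j, hb j⟩, rfl⟩
    rw [Module.Basis.toMatrix_apply, Module.Basis.repr_reindex_apply, ← hy,
      integralBasis_repr_apply]
    exact isIntegral_algebraMap
  obtain ⟨q, hq⟩ := IsIntegrallyClosed.isIntegral_iff.mp (IsIntegral.det hentries)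
  refine ⟨q, ?_⟩
  rw [← b₀.toMatrix_map_vecMul b, Algebra.discr_of_matrix_vecMul, ← hq, eq_intCast,
    Module.Basis.coe_reindex, Algebra.discr_reindex, coe_discr]

theorem NumberField.discr_eq_of_algebra_discr_squarefree {K : Type*} [Field K] [NumberField K]
    {ι : Type*} [Fintype ι] [DecidableEq ι] (b : Module.Basis ι ℚ K)
    (hb : ∀ i, IsIntegral ℤ (b i)) {d : ℤ} (hd : Squarefree d) (hdiscr : Algebra.discr ℚ b = d) :
    discr K = d := by
  obtain ⟨q, hq⟩ := exists_algebra_discr_eq_sq_mul_discr b hb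
  have hdq : d = q ^ 2 * discr K := by exact_mod_cast hdiscr.symm.trans hq
  have hq2 : q ^ 2 = 1 := by
    rcases Int.isUnit_iff.mp (hd q ⟨discr K, by rw [hdq]; ring⟩) with rfl | rfl <;> rfl
  rw [hdq, hq2, one_mul]

section Example

variable {m : ℤ}

theorem irreducible_example_quadratic (hm : m ≠ 0)
    (hD : ∀ s : ℚ, ((5 * m ^ 2 - 2 * m + 1 : ℤ) : ℚ) ≠ s ^ 2) :
    Irreducible (C (m : ℚ) * X ^ 2 + C ((m : ℚ) - 1) * X - C (m : ℚ)) := by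
  rw [sub_eq_add_neg, ← C_neg]
  refine irreducible_quadratic_of_discrim_ne_sq (Int.cast_ne_zero.mpr hm) fun s => ?_
  convert hD s using 1
  rw [discrim]
  push_cast
  ring

variable {K : Type*} [Field K] {α : K}

theorem isIntegral_mul_root_example (hm : m ≠ 0)
    (hroot : (m : K) * α ^ 2 + ((m : K) - 1) * α - (m : K) = 0) :
    IsIntegral ℤ ((m : K) * α) := by
  have := isIntegral_leadingCoeff_smul (C m * X ^ 2 + C (m - 1) * X + C (-m)) α (by
    simpa [sub_eq_add_neg] using hroot)
  rwa [leadingCoeff_quadratic hm, zsmul_eq_mul] at this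

theorem algebraMap_ne_mul_root_example [CharZero K]
    (hD : ∀ s : ℚ, ((5 * m ^ 2 - 2 * m + 1 : ℤ) : ℚ) ≠ s ^ 2)
    (hroot : (m : K) * α ^ 2 + ((m : K) - 1) * α - (m : K) = 0) (r : ℚ) :
    algebraMap ℚ K r ≠ (m : K) * α := by
  intro hr
  refine quadratic_ne_zero_of_discrim_ne_sq (a := 1) (b := (m : ℚ) - 1) (c := -(m : ℚ) ^ 2)
    (fun s => by convert hD s using 1; rw [discrim]; push_cast; ring) r
    ((algebraMap ℚ K).injective ?_)
  simp only [map_add, map_mul, map_sub, map_neg, map_pow, map_one, map_intCast, one_mul, map_zero,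
    hr]
  linear_combination (m : K) * hroot

end Example

theorem small_generators_real_quadratic_example
    (m : ℤ) (hm : 0 < m) (hsf : Squarefree (5 * m ^ 2 - 2 * m + 1))
    (K : Type*) [Field K] [NumberField K]
    (α : K) (hroot : (m : K) * α ^ 2 + ((m : K) - 1) * α - (m : K) = 0)
    (hgen : ℚ⟮α⟯ = ⊤) :
    Irreducible (Polynomial.C (m : ℚ) * Polynomial.X ^ 2 +
        Polynomial.C ((m : ℚ) - 1) * Polynomial.X - Polynomial.C (m : ℚ)) ∧
    Module.finrank ℚ K = 2 ∧
    NumberField.discr K = 5 * m ^ 2 - 2 * m + 1 ∧ 0 < NumberField.discr K ∧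
    ((max |m| (max |m - 1| |(-m)|) : ℤ) : ℝ) / Real.sqrt (NumberField.discr K : ℝ) =
      (m : ℝ) / Real.sqrt (5 * (m : ℝ) ^ 2 - 2 * (m : ℝ) + 1) ∧
    Tendsto (fun k : ℕ => (k : ℝ) / Real.sqrt (5 * (k : ℝ) ^ 2 - 2 * (k : ℝ) + 1)) atTop
      (nhds (1 / Real.sqrt 5)) := by
  have hD : ∀ s : ℚ, ((5 * m ^ 2 - 2 * m + 1 : ℤ) : ℚ) ≠ s ^ 2 :=
    Int.ratCast_ne_sq_of_squarefree hsf (by nlinarith)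
  have hirr := irreducible_example_quadratic hm.ne' hD
  have hrank : Module.finrank ℚ K = 2 := by
    rw [finrank_eq_natDegree_of_irreducible hgen hirr (by simpa using hroot), sub_eq_add_neg,
      ← C_neg, natDegree_quadratic (Int.cast_ne_zero.mpr hm.ne')]
  let b := basisOfLinearIndependentOfCardEqFinrank
    (linearIndependent_one_of_forall_algebraMap_ne (algebraMap_ne_mul_root_example hD hroot))
    (by rw [hrank, Fintype.card_fin])
  have hb : ⇑b = ![1, (m : K) * α] := coe_basisOfLinearIndependentOfCardEqFinrank _ _
  have hβroot : ((m : K) * α) ^ 2 + algebraMap ℚ K ((m : ℚ) - 1) * ((m : K) * α) +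
      algebraMap ℚ K (-(m : ℚ) ^ 2) = 0 := by
    simp only [map_sub, map_neg, map_pow, map_one, map_intCast]
    linear_combination (m : K) * hroot
  have hdiscr : discr K = 5 * m ^ 2 - 2 * m + 1 := by
    refine discr_eq_of_algebra_discr_squarefree b (fun i => ?_) hsf ?_
    · fin_cases i
      · simpa [hb] using isIntegral_one
      · simpa [hb] using isIntegral_mul_root_example hm.ne' hroot
    · rw [Algebra.discr_basis_one_quadratic_root b (by simp [hb]) (by rw [hb]; exact hβroot)]
      push_cast
      ring
  have hheight : max |m| (max |m - 1| |(-m)|) = m := by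
    rw [abs_neg, abs_of_pos hm, max_eq_right (abs_le.mpr ⟨by linarith, by linarith⟩), max_self]
  refine ⟨hirr, hrank, hdiscr, by rw [hdiscr]; nlinarith,
    by rw [hheight, hdiscr]; push_cast; rfl, ?_⟩
  convert tendsto_div_sqrt_quadratic (a := 5) (b := -2) (c := 1) (by norm_num) using 4
  ring
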